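/- arXiv:1803.01948 — 2 statements merged into one kernel-verified Lean document; each statement's English description precedes it below -/
import Mathlib

section
/- Let G be a countable group acting by homeomorphisms on a compact metric space X, and suppose the action is expansive with expansivity constant ε (i.e., if d(T^g x, T^g y) ≤ ε for all g ∈ G then x = y). Then every (ε/2)-asymptotic pair is an asymptotic pair, i.e., A^{ε/2}(X,T) = A(X,T). -/
/-!
Let `(x, y)` be `ε/2`-asymptotic. If the pair were not asymptotic, compactness would give a
cluster point `(p, q)` of `g ↦ (g • x, g • y)` along the cofinite filter with `p ≠ q`. Translating
by `h` permutes `G`, so `dist (h • p) (h • q) ≤ ε/2 ≤ ε` for every `h` by continuity, and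
expansivity forces `p = q`.
-/

/-- `(x,y)` is a `δ`-asymptotic pair: `d(T^g x, T^g y) > δ` for only finitely many `g`. -/
def IsEpsAsymptoticPair {G X : Type*} [Group G] [MetricSpace X] [MulAction G X]
    (δ : ℝ) (x y : X) : Prop :=
  {g : G | δ < dist (g • x) (g • y)}.Finite

/-- `(x,y)` is an asymptotic pair: it is `δ`-asymptotic for every `δ > 0`. -/
def IsAsymptoticPair {G X : Type*} [Group G] [MetricSpace X] [MulAction G X]
    (x y : X) : Prop :=
  ∀ δ : ℝ, 0 < δ → IsEpsAsymptoticPair (G := G) δ x y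

open Filter

section

variable {G X : Type*} [Group G] [MetricSpace X] [MulAction G X]

theorem isEpsAsymptoticPair_iff_eventually_dist_le {δ : ℝ} {x y : X} :
    IsEpsAsymptoticPair (G := G) δ x y ↔ ∀ᶠ g : G in cofinite, dist (g • x) (g • y) ≤ δ := by
  simp only [IsEpsAsymptoticPair, eventually_cofinite, not_le]

theorem IsEpsAsymptoticPair.mono {δ δ' : ℝ} {x y : X} (hxy : IsEpsAsymptoticPair (G := G) δ x y)
    (hδ : δ ≤ δ') : IsEpsAsymptoticPair (G := G) δ' x y :=
  hxy.subset fun _ hg => hδ.trans_lt hg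

theorem IsEpsAsymptoticPair.dist_smul_le_of_mapClusterPt
    (hcont : ∀ g : G, Continuous fun x : X => g • x) {δ : ℝ} {x y : X} {p : X × X}
    (hxy : IsEpsAsymptoticPair (G := G) δ x y)
    (hp : MapClusterPt p cofinite fun g : G => (g • x, g • y)) (h : G) :
    dist (h • p.1) (h • p.2) ≤ δ := by
  set S := {z : X × X | dist (h • z.1) (h • z.2) ≤ δ}
  have hclosed : IsClosed S :=
    isClosed_le (((hcont h).comp continuous_fst).dist ((hcont h).comp continuous_snd))
      continuous_const
  have htranslate : ∀ᶠ g : G in cofinite, dist (h • g • x) (h • g • y) ≤ δ := by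
    simp_rw [smul_smul]
    exact (mul_right_injective h).tendsto_cofinite.eventually
      (isEpsAsymptoticPair_iff_eventually_dist_le.1 hxy)
  exact hclosed.closure_subset (hp.mem_closure_of_mem S htranslate)

theorem IsEpsAsymptoticPair.isAsymptoticPair_of_expansive [CompactSpace X]
    (hcont : ∀ g : G, Continuous fun x : X => g • x) {ε : ℝ}
    (hexp : ∀ x y : X, (∀ g : G, dist (g • x) (g • y) ≤ ε) → x = y) {x y : X}
    (hxy : IsEpsAsymptoticPair (G := G) ε x y) : IsAsymptoticPair (G := G) x y := by
  intro δ hδ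
  by_contra hinf
  have hfar : IsClosed {z : X × X | δ ≤ dist z.1 z.2} :=
    isClosed_le continuous_const (continuous_fst.dist continuous_snd)
  obtain ⟨p, hp_far, hp⟩ := hfar.isCompact.exists_mapClusterPt_of_frequently
    (l := cofinite) (f := fun g : G => (g • x, g • y))
    ((frequently_cofinite_iff_infinite.2 hinf).mono fun _ hg => hg.le)
  have hdiag : p.1 = p.2 := hexp _ _ (hxy.dist_smul_le_of_mapClusterPt hcont hp)
  have hp_far : δ ≤ dist p.1 p.2 := hp_far
  rw [hdiag, dist_self] at hp_far
  exact hδ.not_ge hp_far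

end

theorem eps_asymptotic_eq_asymptotic_of_expansive_general {G X : Type*} [Group G]
    [MetricSpace X] [CompactSpace X] [MulAction G X]
    (hcont : ∀ g : G, Continuous fun x : X => g • x)
    (ε : ℝ) (hε : 0 < ε)
    (hexp : ∀ x y : X, (∀ g : G, dist (g • x) (g • y) ≤ ε) → x = y) :
    {p : X × X | IsEpsAsymptoticPair (G := G) (ε / 2) p.1 p.2} =
      {p : X × X | IsAsymptoticPair (G := G) p.1 p.2} := by
  ext ⟨x, y⟩
  exact ⟨fun hxy => (hxy.mono (half_le_self hε.le)).isAsymptoticPair_of_expansive hcont hexp,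
    fun hxy => hxy _ (half_pos hε)⟩

theorem eps_asymptotic_eq_asymptotic_of_expansive {G X : Type*} [Group G] [Countable G]
    [MetricSpace X] [CompactSpace X] [MulAction G X]
    (hcont : ∀ g : G, Continuous fun x : X => g • x)
    (ε : ℝ) (hε : 0 < ε)
    (hexp : ∀ x y : X, (∀ g : G, dist (g • x) (g • y) ≤ ε) → x = y) :
    {p : X × X | IsEpsAsymptoticPair (G := G) (ε / 2) p.1 p.2} =
      {p : X × X | IsAsymptoticPair (G := G) p.1 p.2} :=
  eps_asymptotic_eq_asymptotic_of_expansive_general hcont ε hε hexp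
end

section
/- Let X ⊆ A^G be a subshift with bounded chain exchangeability with constant N. Then for every pair (x,y) ∈ X² there exist z⁰, z¹, ..., z^N ∈ X with z⁰ = x, z^N = y and (z^i, z^{i+1}) in the closure of the asymptotic relation for each i. In particular the smallest equivalence relation containing the closure of the asymptotic relation is all of X². -/
/-- The left shift action on `A^G`: `(σ^g x)_h = x_{g⁻¹ h}`. -/
def shift {G A : Type*} [Group G] (g : G) (x : G → A) : G → A :=
  fun h => x (g⁻¹ * h)

/-- Patterns `p, q` over support `F` are exchangeable in `X`: there is an asymptotic pair
`(x,y) ∈ X²` with `x|_F = p` and `y|_F = q`. -/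
def Exchangeable {G A : Type*} [Group G] (X : Set (G → A)) (F : Set G) (p q : G → A) : Prop :=
  ∃ x ∈ X, ∃ y ∈ X, {g : G | x g ≠ y g}.Finite ∧
    (∀ h ∈ F, x h = p h) ∧ (∀ h ∈ F, y h = q h)

/-- `X` has bounded chain exchangeability with constant `N`. -/
def BCE {G A : Type*} [Group G] (X : Set (G → A)) (N : ℕ) : Prop :=
  ∀ F : Set G, F.Finite → ∀ a ∈ X, ∀ b ∈ X,
    ∃ r : Fin (N + 1) → G → A,
      (∀ i, ∃ x ∈ X, ∀ h ∈ F, x h = r i h) ∧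
      (∀ h ∈ F, r 0 h = a h) ∧ (∀ h ∈ F, r (Fin.last N) h = b h) ∧
      ∀ i : Fin N, Exchangeable X F (r i.castSucc) (r i.succ)

/-!
For each finite window `s ⊆ G`, bounded chain exchangeability gives a chain of `N + 1` patterns
from `x|_s` to `y|_s` whose consecutive links are realised by asymptotic pairs of `X`. Since
`A^G` is compact, all these data converge simultaneously along one ultrafilter refining the
filter of growing windows. Any two families that agree on the window `s` for every `s` have the
same limit, so the limits of the patterns form a chain from `x` to `y` in the closed set `X`, and
each link is a limit of asymptotic pairs.
-/

open Filter Topology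

def asymptoticPairs {G A : Type*} (X : Set (G → A)) : Set ((G → A) × (G → A)) :=
  {p | p.1 ∈ X ∧ p.2 ∈ X ∧ {g : G | p.1 g ≠ p.2 g}.Finite}

theorem Relation.reflTransGen_of_fin_chain {α : Type*} {r : α → α → Prop} {N : ℕ}
    {z : Fin (N + 1) → α} (h : ∀ i : Fin N, r (z i.castSucc) (z i.succ)) :
    Relation.ReflTransGen r (z 0) (z (Fin.last N)) := by
  suffices ∀ j, Relation.ReflTransGen r (z 0) (z j) from this _
  intro j
  induction j using Fin.induction with
  | zero => exact .refl
  | succ i ih => exact ih.tail (h i)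

theorem eq_of_tendsto_of_agree_on_finsets {G A : Type*} [TopologicalSpace A] [T2Space A]
    {l : Filter (Finset G)} [l.NeBot] (hl : l ≤ atTop) {w w' : Finset G → G → A} {L L' : G → A}
    (hagree : ∀ s, ∀ g ∈ s, w s g = w' s g) (hw : Tendsto w l (𝓝 L))
    (hw' : Tendsto w' l (𝓝 L')) : L = L' := by
  funext g
  have hg : ∀ᶠ s in l, w s g = w' s g :=
    hl <| (eventually_ge_atTop {g}).mono fun s hs =>
      hagree s g (Finset.singleton_subset_iff.mp hs)
  exact tendsto_nhds_unique ((((continuous_apply g).tendsto L).comp hw).congr' hg)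
    (((continuous_apply g).tendsto L').comp hw')

theorem exists_chain_mem_closure_asymptoticPairs {G A : Type*} [Group G] [TopologicalSpace A]
    [CompactSpace A] [T2Space A] {X : Set (G → A)} (hX : IsClosed X) {N : ℕ}
    (hBCE : BCE X N) {x y : G → A} (hx : x ∈ X) (hy : y ∈ X) :
    ∃ z : Fin (N + 1) → G → A, z 0 = x ∧ z (Fin.last N) = y ∧ (∀ i, z i ∈ X) ∧
      ∀ i : Fin N, (z i.castSucc, z i.succ) ∈ closure (asymptoticPairs X) := by
  choose r hrX hr0 hrN hrE using fun s : Finset G => hBCE s s.finite_toSet x hx y hy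
  choose x' hx'X hx' using hrX
  choose u huX v hvX hasym hu hv using hrE
  let U := Ultrafilter.of (atTop : Filter (Finset G))
  have hU : (U : Filter (Finset G)) ≤ atTop := Ultrafilter.of_le _
  have tendsto_lim (w : Finset G → G → A) : Tendsto w U (𝓝 (U.map w).lim) :=
    (U.map w).le_nhds_lim
  have lim_eq {w w' : Finset G → G → A} (hagree : ∀ s, ∀ g ∈ s, w s g = w' s g) :
      (U.map w).lim = (U.map w').lim :=
    eq_of_tendsto_of_agree_on_finsets hU hagree (tendsto_lim w) (tendsto_lim w')
  have lim_const {w : Finset G → G → A} {c : G → A} (hagree : ∀ s, ∀ g ∈ s, w s g = c g) :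
      (U.map w).lim = c :=
    eq_of_tendsto_of_agree_on_finsets hU hagree (tendsto_lim w) tendsto_const_nhds
  refine ⟨fun j => (U.map (r · j)).lim, lim_const hr0, lim_const hrN, fun j => ?_, fun i => ?_⟩
  · beta_reduce
    rw [← lim_eq fun s => hx' s j]
    exact hX.mem_of_tendsto (tendsto_lim _) (.of_forall (hx'X · j))
  · beta_reduce
    rw [← lim_eq fun s => hu s i, ← lim_eq fun s => hv s i]
    exact mem_closure_of_tendsto ((tendsto_lim _).prodMk_nhds (tendsto_lim _))
      (.of_forall fun s => ⟨huX s i, hvX s i, hasym s i⟩)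

theorem bce_implies_asymptotic_class_le_two_general {G A : Type*} [Group G]
    [Fintype A] [TopologicalSpace A] [DiscreteTopology A]
    (X : Set (G → A)) (hclosed : IsClosed X)
    (N : ℕ) (hBCE : BCE X N) :
    (∀ x ∈ X, ∀ y ∈ X,
      ∃ z : Fin (N + 1) → G → A, z 0 = x ∧ z (Fin.last N) = y ∧ (∀ i, z i ∈ X) ∧
        ∀ i : Fin N, (z i.castSucc, z i.succ) ∈
          closure {p : (G → A) × (G → A) |
            p.1 ∈ X ∧ p.2 ∈ X ∧ {g : G | p.1 g ≠ p.2 g}.Finite}) ∧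
    ∀ x ∈ X, ∀ y ∈ X,
      Relation.EqvGen (fun a b => (a, b) ∈
        closure {p : (G → A) × (G → A) |
          p.1 ∈ X ∧ p.2 ∈ X ∧ {g : G | p.1 g ≠ p.2 g}.Finite}) x y := by
  have chain := fun x (hx : x ∈ X) y (hy : y ∈ X) =>
    exists_chain_mem_closure_asymptoticPairs hclosed hBCE hx hy
  refine ⟨chain, fun x hx y hy => ?_⟩
  obtain ⟨z, rfl, rfl, -, hlink⟩ := chain x hx y hy
  exact Relation.EqvGen.reflTransGen_le_eqvGen _ _ _ (Relation.reflTransGen_of_fin_chain hlink)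

theorem bce_implies_asymptotic_class_le_two {G A : Type*} [Group G] [Countable G]
    [Fintype A] [TopologicalSpace A] [DiscreteTopology A]
    (X : Set (G → A)) (hclosed : IsClosed X)
    (hinv : ∀ (g : G) (x : G → A), x ∈ X → shift g x ∈ X)
    (N : ℕ) (hBCE : BCE X N) :
    (∀ x ∈ X, ∀ y ∈ X,
      ∃ z : Fin (N + 1) → G → A, z 0 = x ∧ z (Fin.last N) = y ∧ (∀ i, z i ∈ X) ∧
        ∀ i : Fin N, (z i.castSucc, z i.succ) ∈
          closure {p : (G → A) × (G → A) |
            p.1 ∈ X ∧ p.2 ∈ X ∧ {g : G | p.1 g ≠ p.2 g}.Finite}) ∧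
    ∀ x ∈ X, ∀ y ∈ X,
      Relation.EqvGen (fun a b => (a, b) ∈
        closure {p : (G → A) × (G → A) |
          p.1 ∈ X ∧ p.2 ∈ X ∧ {g : G | p.1 g ≠ p.2 g}.Finite}) x y :=
  bce_implies_asymptotic_class_le_two_general X hclosed N hBCE
end
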